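/- arXiv:2207.05849 — 3 statements merged into one kernel-verified Lean document; each statement's English description precedes it below -/
import Mathlib

section
/- Let P and Q be probability measures on a measurable space with Q ≪ P, and let f̂, f : 𝒜 → [0,1] be measurable. Then for any γ > 0: E_{a∼P}[f(a)] − E_{a∼Q}[f(a)] − (γ/4)·E_{a∼P}[(f̂(a) − f(a))²] ≤ E_{a∼P}[f̂(a)] − E_{a∼Q}[f̂(a)] + (1/γ)·E_{a∼P}[(dQ/dP(a) − 1)²]. -/
open MeasureTheory

theorem stmt_5 {α : Type*} [MeasurableSpace α]
    (P Q : Measure α) [IsProbabilityMeasure P] [IsProbabilityMeasure Q] (hQP : Q ≪ P)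
    (fhat f : α → ℝ) (hfhat_meas : Measurable fhat) (hf_meas : Measurable f)
    (hfhat0 : ∀ a, 0 ≤ fhat a) (hfhat1 : ∀ a, fhat a ≤ 1)
    (hf0 : ∀ a, 0 ≤ f a) (hf1 : ∀ a, f a ≤ 1)
    (γ : ℝ) (hγ : 0 < γ)
    (hchi : Integrable (fun a => ((Q.rnDeriv P a).toReal - 1) ^ 2) P) :
    (∫ a, f a ∂P) - (∫ a, f a ∂Q) - (γ / 4) * ∫ a, (fhat a - f a) ^ 2 ∂P ≤
      (∫ a, fhat a ∂P) - (∫ a, fhat a ∂Q)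
        + (1 / γ) * ∫ a, ((Q.rnDeriv P a).toReal - 1) ^ 2 ∂P := by
  set r : α → ℝ := fun a => (Q.rnDeriv P a).toReal with hr
  have hr_meas : Measurable r := (Measure.measurable_rnDeriv Q P).ennreal_toReal
  have hg_meas : Measurable (fun a => fhat a - f a) := hfhat_meas.sub hf_meas
  have hgbd : ∀ a, |fhat a - f a| ≤ 1 := by
    intro a; rw [abs_le]; constructor <;> nlinarith [hfhat0 a, hfhat1 a, hf0 a, hf1 a]
  have bdd_int : ∀ (μ : Measure α) [IsProbabilityMeasure μ] (h : α → ℝ),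
      Measurable h → (∀ a, |h a| ≤ 1) → Integrable h μ := by
    intro μ _ h hm hb
    refine Integrable.mono' (integrable_const 1) hm.aestronglyMeasurable ?_
    exact Filter.Eventually.of_forall fun a => by simpa using hb a
  have hfP : Integrable f P := bdd_int P f hf_meas fun a => abs_le.2 ⟨by linarith [hf0 a], hf1 a⟩
  have hfQ : Integrable f Q := bdd_int Q f hf_meas fun a => abs_le.2 ⟨by linarith [hf0 a], hf1 a⟩
  have hfhP : Integrable fhat P :=
    bdd_int P fhat hfhat_meas fun a => abs_le.2 ⟨by linarith [hfhat0 a], hfhat1 a⟩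
  have hfhQ : Integrable fhat Q :=
    bdd_int Q fhat hfhat_meas fun a => abs_le.2 ⟨by linarith [hfhat0 a], hfhat1 a⟩
  have hg2 : Integrable (fun a => (fhat a - f a) ^ 2) P := by
    refine bdd_int P _ (hg_meas.pow_const 2) fun a => ?_
    have := hgbd a
    rw [abs_le] at this ⊢
    constructor <;> nlinarith [this.1, this.2]
  -- pointwise bound
  have key : ∀ x y : ℝ, x * y ≤ γ / 4 * x ^ 2 + 1 / γ * y ^ 2 := by
    intro x y
    have h2 : γ * (x * y) ≤ γ * (γ / 4 * x ^ 2 + 1 / γ * y ^ 2) := by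
      have h3 : γ * (γ / 4 * x ^ 2 + 1 / γ * y ^ 2) = γ ^ 2 / 4 * x ^ 2 + y ^ 2 := by
        field_simp
      rw [h3]
      nlinarith [sq_nonneg (γ * x - 2 * y)]
    exact le_of_mul_le_mul_left h2 hγ
  have hpt : ∀ a, (fhat a - f a) * (r a - 1) ≤
      γ / 4 * (fhat a - f a) ^ 2 + 1 / γ * (r a - 1) ^ 2 := fun a => key _ _
  have hpt' : ∀ a, |(fhat a - f a) * (r a - 1)| ≤
      γ / 4 * (fhat a - f a) ^ 2 + 1 / γ * (r a - 1) ^ 2 := by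
    intro a
    rw [abs_mul]
    calc |fhat a - f a| * |r a - 1|
        ≤ γ / 4 * |fhat a - f a| ^ 2 + 1 / γ * |r a - 1| ^ 2 := key _ _
      _ = γ / 4 * (fhat a - f a) ^ 2 + 1 / γ * (r a - 1) ^ 2 := by rw [sq_abs, sq_abs]
  have hbound : Integrable
      (fun a => γ / 4 * (fhat a - f a) ^ 2 + 1 / γ * (r a - 1) ^ 2) P :=
    (hg2.const_mul _).add (hchi.const_mul _)
  have hgr : Integrable (fun a => (fhat a - f a) * (r a - 1)) P := by
    refine Integrable.mono' hbound (hg_meas.mul (hr_meas.sub measurable_const)).aestronglyMeasurable ?_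
    exact Filter.Eventually.of_forall fun a => by
      simpa only [Real.norm_eq_abs, one_div] using hpt' a
  have hgP : Integrable (fun a => fhat a - f a) P := hfhP.sub hfP
  -- change of measure
  have hQeq : ∫ a, (fhat a - f a) ∂Q = ∫ a, r a * (fhat a - f a) ∂P := by
    rw [← integral_rnDeriv_smul hQP]
    simp only [smul_eq_mul]
    rfl
  have hsplit : ∀ a, r a * (fhat a - f a) =
      (fhat a - f a) * (r a - 1) + (fhat a - f a) := fun a => by ring
  have hQeq2 : ∫ a, (fhat a - f a) ∂Q =
      (∫ a, (fhat a - f a) * (r a - 1) ∂P) + ∫ a, (fhat a - f a) ∂P := by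
    rw [hQeq]
    simp_rw [hsplit]
    exact integral_add hgr hgP
  have hmono : ∫ a, (fhat a - f a) * (r a - 1) ∂P ≤
      ∫ a, (γ / 4 * (fhat a - f a) ^ 2 + 1 / γ * (r a - 1) ^ 2) ∂P :=
    integral_mono hgr hbound hpt
  have hrhs : ∫ a, (γ / 4 * (fhat a - f a) ^ 2 + 1 / γ * (r a - 1) ^ 2) ∂P =
      γ / 4 * (∫ a, (fhat a - f a) ^ 2 ∂P) + 1 / γ * ∫ a, (r a - 1) ^ 2 ∂P := by
    rw [integral_add (hg2.const_mul _) (hchi.const_mul _), integral_const_mul, integral_const_mul]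
  have hsubP : ∫ a, (fhat a - f a) ∂P = (∫ a, fhat a ∂P) - ∫ a, f a ∂P :=
    integral_sub hfhP hfP
  have hsubQ : ∫ a, (fhat a - f a) ∂Q = (∫ a, fhat a ∂Q) - ∫ a, f a ∂Q :=
    integral_sub hfhQ hfQ
  have : ∫ a, ((Q.rnDeriv P a).toReal - 1) ^ 2 ∂P = ∫ a, (r a - 1) ^ 2 ∂P := rfl
  rw [this]
  linarith [hmono, hQeq2, hrhs, hsubP, hsubQ]
end

section
/- Let g : 𝒜 → ℝ be measurable and P, Q probability measures with Q ≪ P. Then for any γ > 0: E_{a∼Q}[−g(a)] − E_{a∼P}[−g(a) + (γ/4)g(a)²] ≤ (1/γ)·E_{a∼P}[(dQ/dP(a) − 1)²]. -/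
open MeasureTheory

theorem stmt_6 {α : Type*} [MeasurableSpace α]
    (P Q : Measure α) [IsProbabilityMeasure P] [IsProbabilityMeasure Q] (hQP : Q ≪ P)
    (g : α → ℝ) (hg_meas : Measurable g)
    (γ : ℝ) (hγ : 0 < γ)
    (hgQ : Integrable g Q)
    (hgP : Integrable (fun a => -g a + (γ / 4) * g a ^ 2) P)
    (hchi : Integrable (fun a => ((Q.rnDeriv P a).toReal - 1) ^ 2) P) :
    (∫ a, -g a ∂Q) - (∫ a, (-g a + (γ / 4) * g a ^ 2) ∂P) ≤
      (1 / γ) * ∫ a, ((Q.rnDeriv P a).toReal - 1) ^ 2 ∂P := by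
  have hQint : Integrable (fun a => -g a) Q := hgQ.neg
  have key : (∫ a, -g a ∂Q) = ∫ a, (Q.rnDeriv P a).toReal • (-g a) ∂P :=
    (integral_rnDeriv_smul hQP (f := fun a => -g a)).symm
  have hint1 : Integrable (fun a => (Q.rnDeriv P a).toReal • (-g a)) P :=
    (integrable_rnDeriv_smul_iff hQP).mpr hQint
  rw [key, ← integral_sub hint1 hgP, ← integral_const_mul]
  apply integral_mono (hint1.sub hgP) (hchi.const_mul _)
  intro a
  set v := (Q.rnDeriv P a).toReal
  simp only [Pi.sub_apply, smul_eq_mul]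
  have h : 0 ≤ (1 / γ) * ((v - 1) + (γ / 2) * g a) ^ 2 :=
    mul_nonneg (by positivity) (sq_nonneg _)
  have : (1 / γ) * ((v - 1) + (γ / 2) * g a) ^ 2 =
      (1 / γ) * (v - 1) ^ 2 - (v * (-g a) - (-g a + γ / 4 * g a ^ 2)) := by
    field_simp
    ring
  linarith [h.trans_eq this]
end

section
/- Let μ be a probability measure on 𝒜, h, γ > 0, f̂ : 𝒜 → [0,1] measurable with minimizer â (i.e., f̂(â) ≤ f̂(a) for all a). Define m(a) = 1/(1 + hγ(f̂(a) − f̂(â))), M(ω) = ∫_ω m dμ, and P = M + (1 − M(𝒜))·δ_â. Then for every probability measure Q with dQ/dμ ≤ 1/h and every measurable f : 𝒜 → [0,1]: E_{a∼P}[f(a)] − E_{a∼Q}[f(a)] − (γ/4)·E_{a∼P}[(f̂(a) − f(a))²] ≤ 2/(hγ). -/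
open MeasureTheory

/-- Pointwise core inequality for the smoothed IGW DEC bound. -/
lemma igw_pointwise (h γ u v w t K : ℝ) (hh : 0 < h) (hγ : 0 < γ)
    (hu0 : 0 < u) (hu : u * (1 + h * γ * (w - K)) = 1)
    (hv0 : 0 ≤ v) (hv1 : h * v ≤ 1) :
    u * t - v * t - γ / 4 * (u * (w - t) ^ 2) ≤
      (1 / γ + K) * u + (1 / (h * γ) - 2 / γ - K) * v + 1 / (h * γ) := by
  have hhne : h ≠ 0 := hh.ne'
  have hγne : γ ≠ 0 := hγ.ne'
  have hsub : h * γ * u * (w - K) = 1 - u := by linear_combination hu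
  have heq2 : h * γ * u * (w - K) * (u - v) - (1 - u) * (u - v) = 0 := by
    rw [hsub]; ring
  have hpos : 0 < h * γ * u := by positivity
  have hv2 : h * v ^ 2 ≤ v := by nlinarith [mul_le_mul_of_nonneg_left hv1 hv0]
  have key : 0 ≤ ((1 / γ + K) * u + (1 / (h * γ) - 2 / γ - K) * v + 1 / (h * γ)
      - (u * t - v * t - γ / 4 * (u * (w - t) ^ 2))) * (h * γ * u) := by
    have hEp : ((1 / γ + K) * u + (1 / (h * γ) - 2 / γ - K) * v + 1 / (h * γ)
        - (u * t - v * t - γ / 4 * (u * (w - t) ^ 2))) * (h * γ * u)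
        = h / 4 * (γ * u * (t - w) - 2 * (u - v)) ^ 2 + u ^ 2 + (v - h * v ^ 2)
          - (h * γ * u * (w - K) * (u - v) - (1 - u) * (u - v)) := by
      field_simp
      ring
    rw [hEp, heq2]
    have h1 : 0 ≤ h / 4 * (γ * u * (t - w) - 2 * (u - v)) ^ 2 := by positivity
    nlinarith [sq_nonneg u]
  nlinarith [key, hpos]

/-- Integrability of a measurable function bounded a.e. by a constant, on a finite measure. -/
lemma integrable_of_ae_bound {α : Type*} [MeasurableSpace α] {ν : Measure α}
    [IsFiniteMeasure ν] {φ : α → ℝ} (C : ℝ) (hmeas : Measurable φ)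
    (hb : ∀ᵐ a ∂ν, |φ a| ≤ C) : Integrable φ ν :=
  (integrable_const C).mono' hmeas.aestronglyMeasurable
    (hb.mono fun a ha => by simpa [Real.norm_eq_abs] using ha)

theorem stmt_7 {α : Type*} [MeasurableSpace α] (μ : Measure α) [IsProbabilityMeasure μ]
    (h γ : ℝ) (hh : 0 < h) (hγ : 0 < γ)
    (fhat : α → ℝ) (hfhat_meas : Measurable fhat)
    (hfhat0 : ∀ a, 0 ≤ fhat a) (hfhat1 : ∀ a, fhat a ≤ 1)
    (ahat : α) (hahat : ∀ a, fhat ahat ≤ fhat a)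
    (m : α → ℝ) (hm : m = fun a => 1 / (1 + h * γ * (fhat a - fhat ahat)))
    (M : Measure α) (hM : M = μ.withDensity (fun a => ENNReal.ofReal (m a)))
    (P : Measure α) (hP : P = M + (1 - M Set.univ) • Measure.dirac ahat) :
    ∀ (Q : Measure α), IsProbabilityMeasure Q → Q ≪ μ →
      (∀ᵐ a ∂μ, Q.rnDeriv μ a ≤ ENNReal.ofReal (1 / h)) →
      ∀ (f : α → ℝ), Measurable f → (∀ a, 0 ≤ f a) → (∀ a, f a ≤ 1) →
        (∫ a, f a ∂P) - (∫ a, f a ∂Q) - (γ / 4) * ∫ a, (fhat a - f a) ^ 2 ∂P ≤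
          2 / (h * γ) := by
  intro Q hQprob hQμ hQd f hf_meas hf0 hf1
  have hhγ : 0 < h * γ := mul_pos hh hγ
  -- facts about m
  have hg0 : ∀ a, 0 ≤ fhat a - fhat ahat := fun a => sub_nonneg.2 (hahat a)
  have hd1 : ∀ a, (1:ℝ) ≤ 1 + h * γ * (fhat a - fhat ahat) := fun a =>
    le_add_of_nonneg_right (mul_nonneg hhγ.le (hg0 a))
  have hd0 : ∀ a, (0:ℝ) < 1 + h * γ * (fhat a - fhat ahat) := fun a =>
    lt_of_lt_of_le one_pos (hd1 a)
  have hm0 : ∀ a, 0 < m a := fun a => by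
    rw [hm]; exact one_div_pos.2 (hd0 a)
  have hm1 : ∀ a, m a ≤ 1 := fun a => by
    rw [hm]; exact (div_le_one (hd0 a)).2 (hd1 a)
  have hmid : ∀ a, m a * (1 + h * γ * (fhat a - fhat ahat)) = 1 := fun a => by
    rw [hm]; exact one_div_mul_cancel (hd0 a).ne'
  have hm_meas : Measurable m := by
    rw [hm]; fun_prop
  -- the density of Q
  set q : α → ℝ := fun a => (Q.rnDeriv μ a).toReal with hq_def
  have hq_meas : Measurable q := (Measure.measurable_rnDeriv Q μ).ennreal_toReal
  have hq0 : ∀ a, 0 ≤ q a := fun a => ENNReal.toReal_nonneg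
  have hqh : ∀ᵐ a ∂μ, h * q a ≤ 1 := by
    filter_upwards [hQd] with a ha
    have h2 : q a ≤ 1 / h := by
      have := ENNReal.toReal_mono (by simp) ha
      rwa [ENNReal.toReal_ofReal (by positivity)] at this
    calc h * q a ≤ h * (1 / h) := by
          exact mul_le_mul_of_nonneg_left h2 hh.le
      _ = 1 := by field_simp
  have hqh' : ∀ᵐ a ∂μ, q a ≤ 1 / h := by
    filter_upwards [hqh] with a ha
    rw [le_div_iff₀ hh]; linarith
  have hQint : ∀ (φ : α → ℝ), ∫ a, φ a ∂Q = ∫ a, q a * φ a ∂μ := by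
    intro φ
    rw [← MeasureTheory.integral_rnDeriv_smul hQμ (f := φ)]
    simp [hq_def, smul_eq_mul]
  have hq_int1 : ∫ a, q a ∂μ = 1 := by
    have := hQint (fun _ => 1)
    simp only [mul_one] at this
    rw [← this]
    simp
  -- facts about M
  have hMuniv : M Set.univ ≤ 1 := by
    rw [hM, withDensity_apply _ MeasurableSet.univ, Measure.restrict_univ]
    calc ∫⁻ a, ENNReal.ofReal (m a) ∂μ ≤ ∫⁻ _, 1 ∂μ :=
          lintegral_mono fun a => ENNReal.ofReal_le_one.2 (hm1 a)
      _ = 1 := by simp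
  set c : ℝ := (1 - M Set.univ).toReal with hc_def
  have hc0 : 0 ≤ c := ENNReal.toReal_nonneg
  set M' : ℝ := (M Set.univ).toReal with hM'_def
  have hM'0 : 0 ≤ M' := ENNReal.toReal_nonneg
  have hMc : M' + c = 1 := by
    rw [hM'_def, hc_def, ENNReal.toReal_sub_of_le hMuniv (by simp)]
    simp
  have hMint : ∫ a, m a ∂μ = M' := by
    rw [hM'_def, hM, withDensity_apply _ MeasurableSet.univ, Measure.restrict_univ,
      integral_eq_lintegral_of_nonneg_ae (ae_of_all _ fun a => (hm0 a).le)
        hm_meas.aestronglyMeasurable]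
  have hMint' : ∀ (φ : α → ℝ), ∫ a, φ a ∂M = ∫ a, m a * φ a ∂μ := by
    intro φ
    rw [hM]
    have hrw : (fun a => ENNReal.ofReal (m a)) = fun a => ((m a).toNNReal : ENNReal) := rfl
    rw [hrw, integral_withDensity_eq_integral_smul hm_meas.real_toNNReal φ]
    refine integral_congr_ae (ae_of_all _ fun a => ?_)
    simp [NNReal.smul_def, Real.coe_toNNReal _ (hm0 a).le]
  haveI hMfin : IsFiniteMeasure M := ⟨lt_of_le_of_lt hMuniv ENNReal.one_lt_top⟩
  haveI hDfin : IsFiniteMeasure ((1 - M Set.univ) • Measure.dirac ahat) := by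
    constructor
    rw [Measure.smul_apply, smul_eq_mul]
    calc (1 - M Set.univ) * Measure.dirac ahat Set.univ ≤ 1 * 1 := by
          exact mul_le_mul' tsub_le_self (by simp)
      _ < ⊤ := by simp
  have hPint : ∀ (φ : α → ℝ), Measurable φ → (∀ a, |φ a| ≤ 1) →
      ∫ a, φ a ∂P = ∫ a, m a * φ a ∂μ + c * φ ahat := by
    intro φ hφm hφb
    rw [hP, integral_add_measure (integrable_of_ae_bound 1 hφm (ae_of_all _ hφb))
        (integrable_of_ae_bound 1 hφm (ae_of_all _ hφb)),
      hMint' φ, integral_smul_measure, integral_dirac' φ ahat hφm.stronglyMeasurable]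
    rw [smul_eq_mul, hc_def]
  -- integrability of the various pieces over μ
  have int_m : Integrable m μ :=
    integrable_of_ae_bound 1 hm_meas (ae_of_all _ fun a => by
      rw [abs_of_nonneg (hm0 a).le]; exact hm1 a)
  have int_q : Integrable q μ :=
    integrable_of_ae_bound (1 / h) hq_meas (by
      filter_upwards [hqh'] with a ha
      rw [abs_of_nonneg (hq0 a)]; exact ha)
  have int_mf : Integrable (fun a => m a * f a) μ :=
    integrable_of_ae_bound 1 (hm_meas.mul hf_meas) (ae_of_all _ fun a => by
      rw [abs_of_nonneg (mul_nonneg (hm0 a).le (hf0 a))]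
      calc m a * f a ≤ 1 * 1 := mul_le_mul (hm1 a) (hf1 a) (hf0 a) zero_le_one
        _ = 1 := by ring)
  have int_qf : Integrable (fun a => q a * f a) μ :=
    integrable_of_ae_bound (1 / h) (hq_meas.mul hf_meas) (by
      filter_upwards [hqh'] with a ha
      rw [abs_of_nonneg (mul_nonneg (hq0 a) (hf0 a))]
      calc q a * f a ≤ (1 / h) * 1 :=
            mul_le_mul ha (hf1 a) (hf0 a) (by positivity)
        _ = 1 / h := by ring)
  have hsqb : ∀ a, |(fhat a - f a) ^ 2| ≤ 1 := fun a => by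
    rw [abs_of_nonneg (sq_nonneg _)]
    nlinarith [hfhat0 a, hfhat1 a, hf0 a, hf1 a]
  have int_msq : Integrable (fun a => m a * (fhat a - f a) ^ 2) μ :=
    integrable_of_ae_bound 1 (hm_meas.mul ((hfhat_meas.sub hf_meas).pow_const 2))
      (ae_of_all _ fun a => by
        rw [abs_of_nonneg (mul_nonneg (hm0 a).le (sq_nonneg _))]
        calc m a * (fhat a - f a) ^ 2 ≤ 1 * 1 := by
              refine mul_le_mul (hm1 a) ?_ (sq_nonneg _) zero_le_one
              simpa using hsqb a
          _ = 1 := by ring)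
  -- the two functions to compare
  set K : ℝ := fhat ahat with hK_def
  set F : α → ℝ := fun a => m a * f a - q a * f a - γ / 4 * (m a * (fhat a - f a) ^ 2)
    with hF_def
  set G : α → ℝ := fun a => (1 / γ + K) * m a + (1 / (h * γ) - 2 / γ - K) * q a + 1 / (h * γ)
    with hG_def
  have int_F : Integrable F μ := (int_mf.sub int_qf).sub (int_msq.const_mul (γ / 4))
  have int_G : Integrable G μ :=
    ((int_m.const_mul _).add (int_q.const_mul _)).add (integrable_const _)
  have hFG : ∀ᵐ a ∂μ, F a ≤ G a := by
    filter_upwards [hqh] with a ha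
    exact igw_pointwise h γ (m a) (q a) (fhat a) (f a) K hh hγ (hm0 a) (hmid a) (hq0 a) ha
  have hIFG : ∫ a, F a ∂μ ≤ ∫ a, G a ∂μ := integral_mono_ae int_F int_G hFG
  have hIF : ∫ a, F a ∂μ = ∫ a, m a * f a ∂μ - ∫ a, q a * f a ∂μ
      - γ / 4 * ∫ a, m a * (fhat a - f a) ^ 2 ∂μ := by
    have int1 : Integrable (fun a => m a * f a - q a * f a) μ := int_mf.sub int_qf
    simp only [hF_def]
    rw [integral_sub int1 (int_msq.const_mul (γ / 4)),
      integral_sub int_mf int_qf, integral_const_mul _ _]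
  have hIG : ∫ a, G a ∂μ = (1 / γ + K) * M' + (1 / (h * γ) - 2 / γ - K) + 1 / (h * γ) := by
    have intG1 : Integrable (fun a => (1 / γ + K) * m a) μ := int_m.const_mul _
    have intG2 : Integrable (fun a => (1 / (h * γ) - 2 / γ - K) * q a) μ := int_q.const_mul _
    have intG3 : Integrable (fun a => (1 / γ + K) * m a + (1 / (h * γ) - 2 / γ - K) * q a) μ :=
      intG1.add intG2
    simp only [hG_def]
    rw [integral_add intG3 (integrable_const _), integral_add intG1 intG2,
      integral_const_mul _ _, integral_const_mul _ _, hMint, hq_int1]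
    simp
  -- rewrite the three integrals in the goal
  have hPf : ∫ a, f a ∂P = ∫ a, m a * f a ∂μ + c * f ahat := by
    refine hPint f hf_meas fun a => ?_
    rw [abs_of_nonneg (hf0 a)]; exact hf1 a
  have hPsq : ∫ a, (fhat a - f a) ^ 2 ∂P
      = ∫ a, m a * (fhat a - f a) ^ 2 ∂μ + c * (fhat ahat - f ahat) ^ 2 :=
    hPint _ ((hfhat_meas.sub hf_meas).pow_const 2) hsqb
  have hQf : ∫ a, f a ∂Q = ∫ a, q a * f a ∂μ := hQint f
  rw [hPf, hPsq, hQf]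
  -- final algebra
  have hfinal : (1 / γ + K) * M' + (1 / (h * γ) - 2 / γ - K) + 1 / (h * γ)
      + c * f ahat - γ / 4 * (c * (fhat ahat - f ahat) ^ 2) ≤ 2 / (h * γ) := by
    have hK0 : 0 ≤ K := hfhat0 ahat
    have hfa0 : 0 ≤ f ahat := hf0 ahat
    have hfa1 : f ahat ≤ 1 := hf1 ahat
    have keyAM : c * (f ahat - K) ≤ γ / 4 * (c * (K - f ahat) ^ 2) + c / γ := by
      have h1 : 0 ≤ c * (γ * (f ahat - K) - 2) ^ 2 := mul_nonneg hc0 (sq_nonneg _)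
      have hr : γ * (c / γ) = c := by field_simp
      nlinarith [h1, hr, hγ, mul_pos hγ hγ]
    have hM'c : M' = 1 - c := by linarith
    rw [hM'c]
    have hexp : (1 / γ + K) * (1 - c) + (1 / (h * γ) - 2 / γ - K) + 1 / (h * γ)
        + c * f ahat - γ / 4 * (c * (fhat ahat - f ahat) ^ 2)
        = 2 / (h * γ) - 1 / γ
          + (c * (f ahat - K) - (γ / 4 * (c * (K - f ahat) ^ 2) + c / γ)) := by
      rw [hK_def]
      ring
    rw [hexp]
    have hγ1 : 0 ≤ 1 / γ := by positivity
    have hcγ : 0 ≤ c / γ := by positivity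
    linarith [keyAM]
  calc (∫ a, m a * f a ∂μ + c * f ahat) - ∫ a, q a * f a ∂μ
        - γ / 4 * (∫ a, m a * (fhat a - f a) ^ 2 ∂μ + c * (fhat ahat - f ahat) ^ 2)
      = ∫ a, F a ∂μ + c * f ahat - γ / 4 * (c * (fhat ahat - f ahat) ^ 2) := by
        rw [hIF]; ring
    _ ≤ ∫ a, G a ∂μ + c * f ahat - γ / 4 * (c * (fhat ahat - f ahat) ^ 2) := by
        linarith [hIFG]
    _ = (1 / γ + K) * M' + (1 / (h * γ) - 2 / γ - K) + 1 / (h * γ)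
        + c * f ahat - γ / 4 * (c * (fhat ahat - f ahat) ^ 2) := by rw [hIG]
    _ ≤ 2 / (h * γ) := hfinal
end
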